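/- Let R be a unital ring graded by a group Γ. The following conditions are equivalent: (i) for every graded right ideal I of R there exists a homogeneous idempotent ε ∈ R with ann_r(I) = εR; (ii) for every graded left ideal I of R there exists a homogeneous idempotent ε ∈ R with ann_l(I) = Rε; (iii) for every graded two-sided ideal I of R there exists a homogeneous idempotent ε ∈ R with ann_r(I) = εR. (This is the graded analogue of Clark's lemma on the left-right symmetry of the quasi-Baer condition.) -/

import Mathlib

/-!
Replacing a graded one-sided ideal by the two-sided ideal it generates changes neither its
annihilator nor its gradedness, so (i) and (ii) are equivalent to their two-sided versions.
The two-sided versions are equivalent by Clark's argument: the left annihilator `L` of a graded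
two-sided ideal `I` is again a graded two-sided ideal, so `rightAnn L = eR` for a homogeneous
idempotent `e`. Such an `e` has degree `0`, as `e = e * e` lies in degrees `γ` and `γ + γ`, hence
`1 - e` is a homogeneous idempotent, and `leftAnn I = R(1 - e)` because `L e = 0` and
`I ⊆ rightAnn L = eR`.
-/

/-- `I` is a right ideal of `R` (as a subset). -/
def IsRightIdealSet {R : Type*} [Ring R] (I : Set R) : Prop :=
  0 ∈ I ∧ (∀ a ∈ I, ∀ b ∈ I, a + b ∈ I) ∧ (∀ a ∈ I, -a ∈ I) ∧
    ∀ a ∈ I, ∀ x : R, a * x ∈ I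

/-- `I` is a left ideal of `R` (as a subset). -/
def IsLeftIdealSet {R : Type*} [Ring R] (I : Set R) : Prop :=
  0 ∈ I ∧ (∀ a ∈ I, ∀ b ∈ I, a + b ∈ I) ∧ (∀ a ∈ I, -a ∈ I) ∧
    ∀ a ∈ I, ∀ x : R, x * a ∈ I

/-- `I` is a two-sided ideal of `R` (as a subset). -/
def IsTwoSidedIdealSet {R : Type*} [Ring R] (I : Set R) : Prop :=
  IsRightIdealSet I ∧ IsLeftIdealSet I

/-- The right annihilator of a subset `I` of `R`. -/
def rightAnn {R : Type*} [Ring R] (I : Set R) : Set R :=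
  {x : R | ∀ a ∈ I, a * x = 0}

/-- The left annihilator of a subset `I` of `R`. -/
def leftAnn {R : Type*} [Ring R] (I : Set R) : Set R :=
  {x : R | ∀ a ∈ I, x * a = 0}

open DirectSum

section Annihilators

variable {R : Type*} [Ring R]

theorem subset_rightAnn_leftAnn (I : Set R) : I ⊆ rightAnn (leftAnn I) :=
  fun a ha _ hx => hx a ha

theorem subset_leftAnn_rightAnn (I : Set R) : I ⊆ leftAnn (rightAnn I) :=
  fun a ha _ hx => hx a ha

theorem IsLeftIdealSet.isTwoSidedIdealSet_leftAnn {I : Set R} (hI : IsLeftIdealSet I) :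
    IsTwoSidedIdealSet (leftAnn I) := by
  have mul_mem : ∀ x ∈ leftAnn I, ∀ r, x * r ∈ leftAnn I := fun x hx r a ha => by
    rw [mul_assoc]; exact hx _ (hI.2.2.2 a ha r)
  refine ⟨⟨?_, ?_, ?_, mul_mem⟩, ?_, ?_, ?_, ?_⟩ <;> intros <;>
    simp_all [leftAnn, add_mul, mul_assoc]

theorem IsRightIdealSet.isTwoSidedIdealSet_rightAnn {I : Set R} (hI : IsRightIdealSet I) :
    IsTwoSidedIdealSet (rightAnn I) := by
  have mul_mem : ∀ x ∈ rightAnn I, ∀ r, r * x ∈ rightAnn I := fun x hx r a ha => by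
    rw [← mul_assoc]; exact hx _ (hI.2.2.2 a ha r)
  refine ⟨⟨?_, ?_, ?_, ?_⟩, ?_, ?_, ?_, mul_mem⟩ <;> intros <;>
    simp_all [rightAnn, mul_add, ← mul_assoc]

theorem leftAnn_eq_of_rightAnn_leftAnn_eq {I : Set R} {e : R} (he : IsIdempotentElem e)
    (h : rightAnn (leftAnn I) = {x | ∃ y, x = e * y}) :
    leftAnn I = {x | ∃ y, x = y * (1 - e)} := by
  have he' : e ∈ rightAnn (leftAnn I) := h ▸ ⟨1, (mul_one e).symm⟩
  ext x
  refine ⟨fun hx => ⟨x, by rw [mul_sub, mul_one, he' x hx, sub_zero]⟩, ?_⟩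
  rintro ⟨y, rfl⟩ a ha
  obtain ⟨z, rfl⟩ : a ∈ {x | ∃ y, x = e * y} := h ▸ subset_rightAnn_leftAnn I ha
  rw [mul_assoc, ← mul_assoc (1 - e), he.one_sub_mul_self, zero_mul, mul_zero]

theorem rightAnn_eq_of_leftAnn_rightAnn_eq {I : Set R} {e : R} (he : IsIdempotentElem e)
    (h : leftAnn (rightAnn I) = {x | ∃ y, x = y * e}) :
    rightAnn I = {x | ∃ y, x = (1 - e) * y} := by
  have he' : e ∈ leftAnn (rightAnn I) := h ▸ ⟨1, (one_mul e).symm⟩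
  ext x
  refine ⟨fun hx => ⟨x, by rw [sub_mul, one_mul, he' x hx, sub_zero]⟩, ?_⟩
  rintro ⟨y, rfl⟩ a ha
  obtain ⟨z, rfl⟩ : a ∈ {x | ∃ y, x = y * e} := h ▸ subset_leftAnn_rightAnn I ha
  rw [mul_assoc, ← mul_assoc e, he.mul_one_sub_self, zero_mul, mul_zero]

theorem TwoSidedIdeal.isTwoSidedIdealSet (J : TwoSidedIdeal R) :
    IsTwoSidedIdealSet (J : Set R) :=
  ⟨⟨J.zero_mem, fun _ ha _ hb => J.add_mem ha hb, fun _ ha => J.neg_mem ha,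
      fun _ ha x => J.mul_mem_right _ x ha⟩,
    ⟨J.zero_mem, fun _ ha _ hb => J.add_mem ha hb, fun _ ha => J.neg_mem ha,
      fun _ ha x => J.mul_mem_left x _ ha⟩⟩

theorem rightAnn_span {I : Set R} (hI : IsRightIdealSet I) :
    rightAnn (TwoSidedIdeal.span I : Set R) = rightAnn I := by
  refine subset_antisymm (fun x hx a ha => hx a (TwoSidedIdeal.subset_span ha))
    fun x hx b hb => ?_
  suffices ∀ r, b * r * x = 0 by simpa using this 1
  induction hb using TwoSidedIdeal.span_induction with
  | mem a ha => exact fun r => hx _ (hI.2.2.2 a ha r)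
  | zero => simp
  | add _ _ _ _ hb hc => simp [add_mul, hb, hc]
  | neg _ _ hb => simp [hb]
  | left_absorb c _ _ hb => simp [mul_assoc, hb]
  | right_absorb c _ _ hb => exact fun r => by rw [mul_assoc _ c, hb]

theorem leftAnn_span {I : Set R} (hI : IsLeftIdealSet I) :
    leftAnn (TwoSidedIdeal.span I : Set R) = leftAnn I := by
  refine subset_antisymm (fun x hx a ha => hx a (TwoSidedIdeal.subset_span ha))
    fun x hx b hb => ?_
  suffices ∀ r, x * (r * b) = 0 by simpa using this 1
  induction hb using TwoSidedIdeal.span_induction with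
  | mem a ha => exact fun r => hx _ (hI.2.2.2 a ha r)
  | zero => simp
  | add _ _ _ _ hb hc => simp [mul_add, hb, hc]
  | neg _ _ hb => simp [hb]
  | left_absorb c _ _ hb => exact fun r => by rw [← mul_assoc r c, hb]
  | right_absorb c _ _ hb => simp [← mul_assoc, hb]

end Annihilators

section Graded

variable {ι R σ : Type*} [DecidableEq ι] [Ring R] [SetLike σ R] [AddSubgroupClass σ R]
  (𝒜 : ι → σ)

def IsHomogeneousSet [AddMonoid ι] [Decomposition 𝒜] (I : Set R) : Prop :=
  ∀ a ∈ I, ∀ i : ι, (decompose 𝒜 a i : R) ∈ I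

theorem coe_decompose_mul_mem [AddMonoid ι] [GradedRing 𝒜] {τ : Type*} [SetLike τ R]
    [AddSubmonoidClass τ R] {s : τ} {x y : R}
    (h : ∀ i j, (decompose 𝒜 x i : R) * decompose 𝒜 y j ∈ s) (n : ι) :
    (decompose 𝒜 (x * y) n : R) ∈ s := by
  classical
  rw [decompose_mul, coe_mul_apply]
  exact sum_mem fun ij _ => h ij.1 ij.2

theorem mem_zero_of_isIdempotentElem [AddRightCancelMonoid ι] [GradedRing 𝒜] {e : R}
    (he : IsIdempotentElem e) {i : ι} (hi : e ∈ 𝒜 i) : e ∈ 𝒜 0 := by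
  obtain rfl | hne := eq_or_ne i 0
  · exact hi
  have hii : e ∈ 𝒜 (i + i) := he ▸ SetLike.mul_mem_graded hi hi
  have : e = 0 := by
    simpa [decompose_of_mem_same 𝒜 hi] using
      decompose_of_mem_ne 𝒜 hii (add_eq_right.not.mpr hne)
  exact this ▸ zero_mem _

variable {𝒜}

theorem IsHomogeneousSet.span [AddMonoid ι] [GradedRing 𝒜] {I : Set R}
    (hI : IsHomogeneousSet 𝒜 I) : IsHomogeneousSet 𝒜 (TwoSidedIdeal.span I : Set R) := by
  intro x hx
  induction hx using TwoSidedIdeal.span_induction with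
  | mem a ha => exact fun i => TwoSidedIdeal.subset_span (hI a ha i)
  | zero =>
    simpa only [← GradedRing.proj_apply, SetLike.mem_coe, map_zero] using fun _ => zero_mem _
  | add _ _ _ _ hb hc =>
    simpa only [← GradedRing.proj_apply, SetLike.mem_coe, map_add] using
      fun i => add_mem (hb i) (hc i)
  | neg _ _ hb =>
    simpa only [← GradedRing.proj_apply, SetLike.mem_coe, map_neg] using fun i => neg_mem (hb i)
  | left_absorb c _ _ hb =>
    exact coe_decompose_mul_mem 𝒜 fun _ j => TwoSidedIdeal.mul_mem_left _ _ _ (hb j)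
  | right_absorb c _ _ hb =>
    exact coe_decompose_mul_mem 𝒜 fun i _ => TwoSidedIdeal.mul_mem_right _ _ _ (hb i)

theorem IsHomogeneousSet.leftAnn [AddRightCancelMonoid ι] [GradedRing 𝒜] {I : Set R}
    (hI : IsHomogeneousSet 𝒜 I) : IsHomogeneousSet 𝒜 (leftAnn I) := by
  classical
  intro x hx i a ha
  rw [← sum_support_decompose 𝒜 a, Finset.mul_sum]
  refine Finset.sum_eq_zero fun j _ => ?_
  rw [← coe_decompose_mul_add_of_right_mem 𝒜 (decompose 𝒜 a j).2, hx _ (hI a ha j)]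
  simp

theorem IsHomogeneousSet.rightAnn [AddLeftCancelMonoid ι] [GradedRing 𝒜] {I : Set R}
    (hI : IsHomogeneousSet 𝒜 I) : IsHomogeneousSet 𝒜 (rightAnn I) := by
  classical
  intro x hx i a ha
  rw [← sum_support_decompose 𝒜 a, Finset.sum_mul]
  refine Finset.sum_eq_zero fun j _ => ?_
  rw [← coe_decompose_mul_add_of_left_mem 𝒜 (decompose 𝒜 a j).2, hx _ (hI a ha j)]
  simp

end Graded

section Conditions

variable {ι R σ : Type*} [DecidableEq ι] [Ring R] [SetLike σ R] [AddSubgroupClass σ R]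
  (𝒜 : ι → σ)

def RightAnnGenByHomIdempotent [AddMonoid ι] [Decomposition 𝒜] (P : Set R → Prop) : Prop :=
  ∀ I : Set R, P I → IsHomogeneousSet 𝒜 I →
    ∃ ε : R, IsIdempotentElem ε ∧ (∃ i, ε ∈ 𝒜 i) ∧ rightAnn I = {x | ∃ y, x = ε * y}

def LeftAnnGenByHomIdempotent [AddMonoid ι] [Decomposition 𝒜] (P : Set R → Prop) : Prop :=
  ∀ I : Set R, P I → IsHomogeneousSet 𝒜 I →
    ∃ ε : R, IsIdempotentElem ε ∧ (∃ i, ε ∈ 𝒜 i) ∧ leftAnn I = {x | ∃ y, x = y * ε}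

variable {𝒜}

theorem RightAnnGenByHomIdempotent.mono [AddMonoid ι] [Decomposition 𝒜]
    {P Q : Set R → Prop} (hPQ : ∀ I, P I → Q I) (h : RightAnnGenByHomIdempotent 𝒜 Q) :
    RightAnnGenByHomIdempotent 𝒜 P :=
  fun I hI hhom => h I (hPQ I hI) hhom

theorem LeftAnnGenByHomIdempotent.mono [AddMonoid ι] [Decomposition 𝒜]
    {P Q : Set R → Prop} (hPQ : ∀ I, P I → Q I) (h : LeftAnnGenByHomIdempotent 𝒜 Q) :
    LeftAnnGenByHomIdempotent 𝒜 P :=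
  fun I hI hhom => h I (hPQ I hI) hhom

theorem RightAnnGenByHomIdempotent.of_twoSided [AddMonoid ι] [GradedRing 𝒜]
    (h : RightAnnGenByHomIdempotent 𝒜 IsTwoSidedIdealSet) :
    RightAnnGenByHomIdempotent 𝒜 IsRightIdealSet := by
  intro I hI hhom
  rw [← rightAnn_span hI]
  exact h _ (TwoSidedIdeal.isTwoSidedIdealSet _) hhom.span

theorem LeftAnnGenByHomIdempotent.of_twoSided [AddMonoid ι] [GradedRing 𝒜]
    (h : LeftAnnGenByHomIdempotent 𝒜 IsTwoSidedIdealSet) :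
    LeftAnnGenByHomIdempotent 𝒜 IsLeftIdealSet := by
  intro I hI hhom
  rw [← leftAnn_span hI]
  exact h _ (TwoSidedIdeal.isTwoSidedIdealSet _) hhom.span

theorem LeftAnnGenByHomIdempotent.of_right [AddCancelMonoid ι] [GradedRing 𝒜]
    (h : RightAnnGenByHomIdempotent 𝒜 IsTwoSidedIdealSet) :
    LeftAnnGenByHomIdempotent 𝒜 IsTwoSidedIdealSet := by
  intro I hI hhom
  obtain ⟨e, he, ⟨i, hi⟩, hann⟩ :=
    h (leftAnn I) hI.2.isTwoSidedIdealSet_leftAnn hhom.leftAnn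
  exact ⟨1 - e, he.one_sub, ⟨0, sub_mem (SetLike.one_mem_graded 𝒜)
    (mem_zero_of_isIdempotentElem 𝒜 he hi)⟩, leftAnn_eq_of_rightAnn_leftAnn_eq he hann⟩

theorem RightAnnGenByHomIdempotent.of_left [AddCancelMonoid ι] [GradedRing 𝒜]
    (h : LeftAnnGenByHomIdempotent 𝒜 IsTwoSidedIdealSet) :
    RightAnnGenByHomIdempotent 𝒜 IsTwoSidedIdealSet := by
  intro I hI hhom
  obtain ⟨e, he, ⟨i, hi⟩, hann⟩ :=
    h (rightAnn I) hI.1.isTwoSidedIdealSet_rightAnn hhom.rightAnn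
  exact ⟨1 - e, he.one_sub, ⟨0, sub_mem (SetLike.one_mem_graded 𝒜)
    (mem_zero_of_isIdempotentElem 𝒜 he hi)⟩, rightAnn_eq_of_leftAnn_rightAnn_eq he hann⟩

end Conditions

/-- Graded version of Clark's lemma: for a unital `Γ`-graded ring `R`, the following are
equivalent: (i) the right annihilator of every graded right ideal is `εR` for a
homogeneous idempotent `ε`; (ii) the left annihilator of every graded left ideal is `Rε`
for a homogeneous idempotent `ε`; (iii) the right annihilator of every graded two-sided
ideal is `εR` for a homogeneous idempotent `ε`. -/
theorem graded_quasiBaer_left_right_symmetric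
    {Γ : Type*} [AddGroup Γ] [DecidableEq Γ]
    {R : Type*} [Ring R]
    (𝒜 : Γ → AddSubgroup R) [GradedRing 𝒜] :
    ((∀ I : Set R, IsRightIdealSet I →
        (∀ a ∈ I, ∀ γ : Γ, ((DirectSum.decompose 𝒜 a) γ : R) ∈ I) →
        ∃ ε : R, ε * ε = ε ∧ (∃ γ : Γ, ε ∈ 𝒜 γ) ∧
          rightAnn I = {x : R | ∃ y : R, x = ε * y})
      ↔
      (∀ I : Set R, IsLeftIdealSet I →
        (∀ a ∈ I, ∀ γ : Γ, ((DirectSum.decompose 𝒜 a) γ : R) ∈ I) →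
        ∃ ε : R, ε * ε = ε ∧ (∃ γ : Γ, ε ∈ 𝒜 γ) ∧
          leftAnn I = {x : R | ∃ y : R, x = y * ε})) ∧
    ((∀ I : Set R, IsLeftIdealSet I →
        (∀ a ∈ I, ∀ γ : Γ, ((DirectSum.decompose 𝒜 a) γ : R) ∈ I) →
        ∃ ε : R, ε * ε = ε ∧ (∃ γ : Γ, ε ∈ 𝒜 γ) ∧
          leftAnn I = {x : R | ∃ y : R, x = y * ε})
      ↔
      (∀ I : Set R, IsTwoSidedIdealSet I →
        (∀ a ∈ I, ∀ γ : Γ, ((DirectSum.decompose 𝒜 a) γ : R) ∈ I) →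
        ∃ ε : R, ε * ε = ε ∧ (∃ γ : Γ, ε ∈ 𝒜 γ) ∧
          rightAnn I = {x : R | ∃ y : R, x = ε * y})) := by
  have right_iff_twoSided : RightAnnGenByHomIdempotent 𝒜 IsRightIdealSet ↔
      RightAnnGenByHomIdempotent 𝒜 IsTwoSidedIdealSet :=
    ⟨.mono fun _ hI => hI.1, .of_twoSided⟩
  have left_iff_twoSided : LeftAnnGenByHomIdempotent 𝒜 IsLeftIdealSet ↔
      LeftAnnGenByHomIdempotent 𝒜 IsTwoSidedIdealSet :=
    ⟨.mono fun _ hI => hI.2, .of_twoSided⟩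
  have twoSided_iff : RightAnnGenByHomIdempotent 𝒜 IsTwoSidedIdealSet ↔
      LeftAnnGenByHomIdempotent 𝒜 IsTwoSidedIdealSet :=
    ⟨.of_right, .of_left⟩
  exact ⟨right_iff_twoSided.trans (twoSided_iff.trans left_iff_twoSided.symm),
    left_iff_twoSided.trans twoSided_iff.symm⟩
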